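/- arXiv:2405.03560 — 5 statements merged into one kernel-verified Lean document; each statement's English description precedes it below -/
import Mathlib

section
/- Let τ > 0 and suppose the index set I has at least two elements. Then S∞_adw(τ) ⊆ S̄(τ), and the inclusion is strict: every σ belonging to S_adw(τ,N₀) for some N₀ ∈ ℕ satisfies limsup_{t→∞}(N_σ(0,t) − t/τ) < +∞, and there exists a switching signal σ ∈ S̄(τ) that belongs to S_adw(τ,N₀) for no N₀ ∈ ℕ (for instance, a signal having exactly k−1 discontinuity points in each interval [k²τ, (k²+1)τ), k ≥ 1, and constant otherwise). -/
noncomputable section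

/-- A switching signal over the index set `I`: a piecewise-constant right-continuous
function `toFun : [０,∞) → I` together with its set of switching instants
(`0` is counted as a switching instant; the positive switching instants are exactly
the discontinuity points of the signal, and the set of instants is locally finite). -/
structure SwitchingSignal (I : Type*) where
  toFun : ℝ → I
  instants : Set ℝ
  zero_mem : (0 : ℝ) ∈ instants
  nonneg : ∀ t ∈ instants, (0 : ℝ) ≤ t
  finite_le : ∀ T : ℝ, (instants ∩ Set.Iic T).Finite
  const_between : ∀ s t : ℝ, 0 ≤ s → s ≤ t → instants ∩ Set.Ioc s t = ∅ → toFun s = toFun t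
  jump : ∀ t ∈ instants, 0 < t → ∀ s : ℝ, 0 ≤ s → s < t → instants ∩ Set.Ioo s t = ∅ →
    toFun s ≠ toFun t

/-- `Nsw σ s t` : the number of switching instants of `σ` in the interval `[s, t)`. -/
def Nsw {I : Type*} (σ : SwitchingSignal I) (s t : ℝ) : ℕ :=
  (σ.instants ∩ Set.Ico s t).ncard

/-- The class of `τ` dwell-time signals: any two consecutive switching instants
are at least `τ` apart. -/
def Sdw {I : Type*} (τ : ℝ) (σ : SwitchingSignal I) : Prop :=
  ∀ a b : ℝ, a ∈ σ.instants → b ∈ σ.instants → a < b →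
    σ.instants ∩ Set.Ioo a b = ∅ → τ ≤ b - a

/-- The class of `(τ, N₀)` average dwell-time signals. -/
def Sadw {I : Type*} (τ : ℝ) (N₀ : ℕ) (σ : SwitchingSignal I) : Prop :=
  ∀ s t : ℝ, 0 ≤ s → s ≤ t → (Nsw σ s t : ℝ) ≤ (N₀ : ℝ) + (t - s) / τ

/-- The class of `τ` average dwell-time signals (arbitrary chattering bound). -/
def SadwInf {I : Type*} (τ : ℝ) (σ : SwitchingSignal I) : Prop :=
  ∃ N₀ : ℕ, Sadw τ N₀ σ

/-- The class of eventually `τ`-average signals: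
`limsup_{t→∞} (N_σ(0,t) - t/τ) < +∞`. -/
def Sbar {I : Type*} (τ : ℝ) (σ : SwitchingSignal I) : Prop :=
  ∃ C : ℝ, ∀ᶠ t in Filter.atTop, (Nsw σ 0 t : ℝ) - t / τ ≤ C

/-- Class `K` comparison functions. -/
def IsClassK (α : ℝ → ℝ) : Prop :=
  ContinuousOn α (Set.Ici 0) ∧ α 0 = 0 ∧ StrictMonoOn α (Set.Ici 0)

/-- Class `K∞` comparison functions. -/
def IsClassKInf (α : ℝ → ℝ) : Prop :=
  IsClassK α ∧ ∀ M : ℝ, ∃ r : ℝ, 0 ≤ r ∧ M ≤ α r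

/-- Class `KL` comparison functions. -/
def IsClassKL (β : ℝ → ℝ → ℝ) : Prop :=
  ContinuousOn (fun p : ℝ × ℝ => β p.1 p.2) (Set.Ici 0 ×ˢ Set.Ici 0) ∧
  (∀ t : ℝ, 0 ≤ t → β 0 t = 0 ∧ StrictMonoOn (fun r => β r t) (Set.Ici 0)) ∧
  (∀ r : ℝ, 0 ≤ r → AntitoneOn (fun t => β r t) (Set.Ici 0) ∧
    Filter.Tendsto (fun t => β r t) Filter.atTop (nhds 0)) ∧
  (∀ r t : ℝ, 0 ≤ r → 0 ≤ t → 0 ≤ β r t)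

/-- A (Carathéodory, forward) solution of the switched system `ẋ = f_{σ(t)}(x)`
relative to the switching signal `σ`: continuous on `[0,∞)` and at each `t ≥ 0`
right-differentiable with right derivative `f_{σ(t)}(x(t))`. -/
def IsSolution {I : Type*} {n : ℕ}
    (f : I → EuclideanSpace ℝ (Fin n) → EuclideanSpace ℝ (Fin n))
    (σ : SwitchingSignal I) (x : ℝ → EuclideanSpace ℝ (Fin n)) : Prop :=
  ContinuousOn x (Set.Ici 0) ∧
    ∀ t : ℝ, 0 ≤ t → HasDerivWithinAt x (f (σ.toFun t) (x t)) (Set.Ici t) t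

/-- A solution of the single subsystem `ẋ = f_i(x)`. -/
def IsSubSolution {I : Type*} {n : ℕ}
    (f : I → EuclideanSpace ℝ (Fin n) → EuclideanSpace ℝ (Fin n))
    (i : I) (x : ℝ → EuclideanSpace ℝ (Fin n)) : Prop :=
  ContinuousOn x (Set.Ici 0) ∧
    ∀ t : ℝ, 0 ≤ t → HasDerivWithinAt x (f i (x t)) (Set.Ici t) t

/-- Well-posedness of the family `{f_i}`: each `f_i` vanishes at the origin and each
subsystem has a unique forward solution from every initial condition; `Φ i` is the
corresponding (semi-)flow. -/
structure WellPosed {I : Type*} {n : ℕ}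
    (f : I → EuclideanSpace ℝ (Fin n) → EuclideanSpace ℝ (Fin n)) where
  zero : ∀ i, f i 0 = 0
  Φ : I → ℝ → EuclideanSpace ℝ (Fin n) → EuclideanSpace ℝ (Fin n)
  isSol : ∀ i x₀, IsSubSolution f i (fun t => Φ i t x₀)
  init : ∀ i x₀, Φ i 0 x₀ = x₀
  unique : ∀ (i : I) (x₀ : EuclideanSpace ℝ (Fin n)) (y : ℝ → EuclideanSpace ℝ (Fin n)),
    IsSubSolution f i y → y 0 = x₀ → ∀ t : ℝ, 0 ≤ t → y t = Φ i t x₀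

/-- Uniform global asymptotic stability with respect to a class of switching signals. -/
def UGAS {I : Type*} {n : ℕ}
    (f : I → EuclideanSpace ℝ (Fin n) → EuclideanSpace ℝ (Fin n))
    (Scl : SwitchingSignal I → Prop) : Prop :=
  ∃ β : ℝ → ℝ → ℝ, IsClassKL β ∧
    ∀ σ : SwitchingSignal I, Scl σ → ∀ x : ℝ → EuclideanSpace ℝ (Fin n),
      IsSolution f σ x → ∀ t : ℝ, 0 ≤ t → ‖x t‖ ≤ β ‖x 0‖ t

/-- Uniform global exponential stability with decay `ρ`, with respect to
a class of switching signals. -/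
def UGES {I : Type*} {n : ℕ}
    (f : I → EuclideanSpace ℝ (Fin n) → EuclideanSpace ℝ (Fin n))
    (ρ : ℝ) (Scl : SwitchingSignal I → Prop) : Prop :=
  ∃ M : ℝ, 0 ≤ M ∧
    ∀ σ : SwitchingSignal I, Scl σ → ∀ x : ℝ → EuclideanSpace ℝ (Fin n),
      IsSolution f σ x → ∀ t : ℝ, 0 ≤ t → ‖x t‖ ≤ M * Real.exp (-ρ * t) * ‖x 0‖

/-- `τ`-dependent uniform global boundedness (`τ`-UGB). -/
def TauUGB {I : Type*} {n : ℕ}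
    (f : I → EuclideanSpace ℝ (Fin n) → EuclideanSpace ℝ (Fin n)) (τ : ℝ) : Prop :=
  ∃ η₁ η₂ : ℝ → ℝ, ∃ α : ℝ, IsClassKInf η₁ ∧ IsClassKInf η₂ ∧ 0 ≤ α ∧
    ∀ σ : SwitchingSignal I, ∀ x : ℝ → EuclideanSpace ℝ (Fin n), IsSolution f σ x →
      ∀ t : ℝ, 0 ≤ t →
        ‖x t‖ ≤ η₁ (Real.exp (α * τ * (Nsw σ 0 t : ℝ)) * Real.exp (-(1 + α) * t) * η₂ ‖x 0‖)

/-- `τ`-dependent uniform global exponential boundedness with decay `ρ` (`τ`-UGEB_ρ). -/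
def TauUGEB {I : Type*} {n : ℕ}
    (f : I → EuclideanSpace ℝ (Fin n) → EuclideanSpace ℝ (Fin n)) (τ ρ : ℝ) : Prop :=
  ∃ M α : ℝ, 0 < M ∧ 0 ≤ α ∧
    ∀ σ : SwitchingSignal I, ∀ x : ℝ → EuclideanSpace ℝ (Fin n), IsSolution f σ x →
      ∀ t : ℝ, 0 ≤ t →
        ‖x t‖ ≤ M * Real.exp (α * τ * (Nsw σ 0 t : ℝ)) * Real.exp (-(ρ + α) * t) * ‖x 0‖

/-- `Lip₀`: locally Lipschitz on `ℝⁿ \ {0}`. -/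
def Lip0 {n : ℕ} (V : EuclideanSpace ℝ (Fin n) → ℝ) : Prop :=
  ∀ x : EuclideanSpace ℝ (Fin n), x ≠ 0 →
    ∃ (K : NNReal) (s : Set (EuclideanSpace ℝ (Fin n))), s ∈ nhds x ∧ LipschitzOnWith K V s

/-- The Dini derivative of `V` along the flow `Φi` :
`D⁺V(x) = limsup_{h→0⁺} (V(Φi(h,x)) - V(x))/h`, with values in `EReal`. -/
def dini {n : ℕ} (Φi : ℝ → EuclideanSpace ℝ (Fin n) → EuclideanSpace ℝ (Fin n))
    (V : EuclideanSpace ℝ (Fin n) → ℝ) (x : EuclideanSpace ℝ (Fin n)) : EReal :=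
  Filter.limsup (fun h : ℝ => (((V (Φi h x) - V x) / h : ℝ) : EReal))
    (nhdsWithin 0 (Set.Ioi 0))

/-- A solution of the switched linear system `ẋ = A_{σ(t)} x`. -/
def IsLinSolution {m n : ℕ} (A : Fin m → Matrix (Fin n) (Fin n) ℝ)
    (σ : SwitchingSignal (Fin m)) (x : ℝ → EuclideanSpace ℝ (Fin n)) : Prop :=
  ContinuousOn x (Set.Ici 0) ∧
    ∀ t : ℝ, 0 ≤ t →
      HasDerivWithinAt x (Matrix.toEuclideanLin (A (σ.toFun t)) (x t)) (Set.Ici t) t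

/-- UGES_ρ for the switched linear system, w.r.t. a class of switching signals. -/
def LinUGES {m n : ℕ} (A : Fin m → Matrix (Fin n) (Fin n) ℝ) (ρ : ℝ)
    (Scl : SwitchingSignal (Fin m) → Prop) : Prop :=
  ∃ M : ℝ, 0 ≤ M ∧
    ∀ σ : SwitchingSignal (Fin m), Scl σ → ∀ x : ℝ → EuclideanSpace ℝ (Fin n),
      IsLinSolution A σ x → ∀ t : ℝ, 0 ≤ t → ‖x t‖ ≤ M * Real.exp (-ρ * t) * ‖x 0‖

/-- `τ`-UGEB_ρ for the switched linear system. -/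
def LinTauUGEB {m n : ℕ} (A : Fin m → Matrix (Fin n) (Fin n) ℝ) (τ ρ : ℝ) : Prop :=
  ∃ M α : ℝ, 0 < M ∧ 0 ≤ α ∧
    ∀ σ : SwitchingSignal (Fin m), ∀ x : ℝ → EuclideanSpace ℝ (Fin n),
      IsLinSolution A σ x → ∀ t : ℝ, 0 ≤ t →
        ‖x t‖ ≤ M * Real.exp (α * τ * (Nsw σ 0 t : ℝ)) * Real.exp (-(ρ + α) * t) * ‖x 0‖

/-- The Dini derivative of `v` along the linear flow of `A`:
`D⁺_A v(x) = limsup_{h→0⁺} (v(exp(hA)x) - v(x))/h`, with values in `EReal`. -/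
def diniLin {n : ℕ} (A : Matrix (Fin n) (Fin n) ℝ)
    (v : EuclideanSpace ℝ (Fin n) → ℝ) (x : EuclideanSpace ℝ (Fin n)) : EReal :=
  Filter.limsup
    (fun h : ℝ =>
      (((v (Matrix.toEuclideanLin (NormedSpace.exp (h • A)) x) - v x) / h : ℝ) : EReal))
    (nhdsWithin 0 (Set.Ioi 0))

/-- `v : ℝⁿ → ℝ` is a norm. -/
def IsNorm {n : ℕ} (v : EuclideanSpace ℝ (Fin n) → ℝ) : Prop :=
  (∀ x, v x = 0 ↔ x = 0) ∧
  (∀ (c : ℝ) (x : EuclideanSpace ℝ (Fin n)), v (c • x) = |c| * v x) ∧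
  (∀ x y : EuclideanSpace ℝ (Fin n), v (x + y) ≤ v x + v y)

/-- `Ψ_ε(t) = min_{s ∈ [0,t]} (ρ(s) + ε (t - s))`. -/
def Psi (ε : ℝ) (ρ : ℝ → ℝ) (t : ℝ) : ℝ :=
  sInf ((fun s => ρ s + ε * (t - s)) '' Set.Icc 0 t)

end

/-! A `(τ, N₀)` signal satisfies `N(0, t) ≤ N₀ + t / τ`, which is already the bound defining
`S̄(τ)`. For strictness, let the signal switch `k` times, equally spaced, inside each window
`[k²τ, k²τ + τ)`. Up to time `t` only the bursts `k ≤ K` with `K² ≤ t / τ` have started, and they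
contain at most `K²` switches, so `N(0, t) ≤ 1 + t / τ`; but the windows of length `τ`
contain arbitrarily many switches, which no chattering bound `N₀` allows. -/

open Set Filter

lemma ncard_inter_Iic_eq_add {S : Set ℝ} {s t : ℝ} (hst : s ≤ t) (hfin : (S ∩ Iic t).Finite) :
    (S ∩ Iic t).ncard = (S ∩ Iic s).ncard + (S ∩ Ioc s t).ncard := by
  rw [← ncard_union_eq ((Iic_disjoint_Ioc le_rfl).mono inter_subset_right inter_subset_right)
      (hfin.subset (inter_subset_inter_right _ (Iic_subset_Iic.mpr hst)))
      (hfin.subset (inter_subset_inter_right _ Ioc_subset_Iic_self)),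
    ← inter_union_distrib_left, Iic_union_Ioc_eq_Iic hst]

section Signals

variable {I : Type*}

namespace SwitchingSignal

noncomputable def alternating {a b : I} (hab : a ≠ b) (S : Set ℝ) (zero_mem : 0 ∈ S)
    (nonneg : ∀ t ∈ S, 0 ≤ t) (finite_le : ∀ T, (S ∩ Iic T).Finite) : SwitchingSignal I where
  toFun t := if Even (S ∩ Iic t).ncard then a else b
  instants := S
  zero_mem := zero_mem
  nonneg := nonneg
  finite_le := finite_le
  const_between s t _ hst hS := by
    simp only [ncard_inter_Iic_eq_add hst (finite_le t), hS, ncard_empty, add_zero]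
  jump t ht _ s _ hst hS := by
    have hsingle : S ∩ Ioc s t = {t} := by
      rw [← Ioo_insert_right hst, inter_insert_of_mem ht, hS, insert_empty_eq]
    rw [ncard_inter_Iic_eq_add hst.le (finite_le t), hsingle, ncard_singleton]
    by_cases h : Even (S ∩ Iic s).ncard <;> simp [h, Nat.even_add_one, hab, hab.symm]

end SwitchingSignal

lemma SadwInf.sbar {τ : ℝ} {σ : SwitchingSignal I} (h : SadwInf τ σ) : Sbar τ σ := by
  obtain ⟨N₀, hN₀⟩ := h
  refine ⟨N₀, (eventually_ge_atTop 0).mono fun t ht => ?_⟩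
  have hle := hN₀ 0 t le_rfl ht
  rw [sub_zero] at hle
  linarith

lemma not_sadwInf_of_forall_lt_nsw {τ : ℝ} (hτ : 0 < τ) {σ : SwitchingSignal I}
    (h : ∀ N : ℕ, ∃ s, 0 ≤ s ∧ N + 1 < Nsw σ s (s + τ)) : ¬ SadwInf τ σ := by
  rintro ⟨N₀, hN₀⟩
  obtain ⟨s, hs, hlt⟩ := h N₀
  have hle := hN₀ s (s + τ) hs (by linarith)
  rw [add_sub_cancel_left, div_self hτ.ne'] at hle
  have hlt' : ((N₀ + 1 : ℕ) : ℝ) < Nsw σ s (s + τ) := by exact_mod_cast hlt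
  push_cast at hlt'
  linarith

end Signals

section Bursts

variable {τ : ℝ}

noncomputable def burstPoint (τ : ℝ) (k j : ℕ) : ℝ := k ^ 2 * τ + j * τ / k

def burstInstants (τ : ℝ) : Set ℝ :=
  insert 0 {x | ∃ k j : ℕ, 1 ≤ k ∧ j < k ∧ burstPoint τ k j = x}

noncomputable def burstInstantsUpTo (τ : ℝ) (K : ℕ) : Finset ℝ :=
  insert 0 (Finset.image₂ (burstPoint τ) (Finset.Icc 1 K) (Finset.range K))

lemma sq_mul_le_burstPoint (hτ : 0 ≤ τ) (k j : ℕ) : k ^ 2 * τ ≤ burstPoint τ k j :=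
  le_add_of_nonneg_right (by positivity)

lemma burstPoint_lt (hτ : 0 < τ) {k j : ℕ} (hjk : j < k) : burstPoint τ k j < k ^ 2 * τ + τ := by
  have hk : (0 : ℝ) < k := by exact_mod_cast (Nat.zero_le j).trans_lt hjk
  have hjk' : (j : ℝ) < k := by exact_mod_cast hjk
  unfold burstPoint
  gcongr
  rw [div_lt_iff₀ hk]
  nlinarith

lemma burstPoint_strictMono (hτ : 0 < τ) {k : ℕ} (hk : 0 < k) : StrictMono (burstPoint τ k) := by
  intro i j hij
  unfold burstPoint
  gcongr

lemma burstInstants_nonneg (hτ : 0 ≤ τ) : ∀ x ∈ burstInstants τ, 0 ≤ x := by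
  rintro x (rfl | ⟨k, j, -, -, rfl⟩)
  · exact le_rfl
  · exact (by positivity : (0 : ℝ) ≤ k ^ 2 * τ).trans (sq_mul_le_burstPoint hτ k j)

lemma card_burstInstantsUpTo_le (K : ℕ) : (burstInstantsUpTo τ K).card ≤ 1 + K * K := by
  refine (Finset.card_insert_le _ _).trans ?_
  have := Finset.card_image₂_le (burstPoint τ) (Finset.Icc 1 K) (Finset.range K)
  simp only [Nat.card_Icc, add_tsub_cancel_right, Finset.card_range] at this
  omega

lemma burstInstants_inter_Iic_subset (hτ : 0 < τ) (T : ℝ) :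
    burstInstants τ ∩ Iic T ⊆ burstInstantsUpTo τ (Nat.sqrt ⌊T / τ⌋₊) := by
  rintro x ⟨rfl | ⟨k, j, hk, hjk, rfl⟩, hxT⟩
  · exact Finset.mem_insert_self _ _
  · have hkT : ((k ^ 2 : ℕ) : ℝ) ≤ T / τ := by
      rw [le_div_iff₀ hτ]
      push_cast
      exact (sq_mul_le_burstPoint hτ.le k j).trans hxT
    have hkK : k ≤ Nat.sqrt ⌊T / τ⌋₊ := Nat.le_sqrt'.mpr (Nat.le_floor hkT)
    exact Finset.mem_insert_of_mem (Finset.mem_image₂_of_mem (Finset.mem_Icc.mpr ⟨hk, hkK⟩)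
      (Finset.mem_range.mpr (hjk.trans_le hkK)))

lemma burstInstants_finite_le (hτ : 0 < τ) (T : ℝ) : (burstInstants τ ∩ Iic T).Finite :=
  (Finset.finite_toSet _).subset (burstInstants_inter_Iic_subset hτ T)

lemma ncard_burstInstants_inter_Iic_le (hτ : 0 < τ) {T : ℝ} (hT : 0 ≤ T) :
    ((burstInstants τ ∩ Iic T).ncard : ℝ) ≤ 1 + T / τ := by
  set K := Nat.sqrt ⌊T / τ⌋₊
  have hcard : (burstInstants τ ∩ Iic T).ncard ≤ 1 + K * K := by
    refine (ncard_le_ncard (burstInstants_inter_Iic_subset hτ T) (Finset.finite_toSet _)).trans ?_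
    rw [ncard_coe_finset]
    exact card_burstInstantsUpTo_le K
  have hK : ((K * K : ℕ) : ℝ) ≤ T / τ :=
    (Nat.cast_le.mpr (Nat.sqrt_le _)).trans (Nat.floor_le (div_nonneg hT hτ.le))
  calc ((burstInstants τ ∩ Iic T).ncard : ℝ) ≤ ((1 + K * K : ℕ) : ℝ) := by exact_mod_cast hcard
    _ ≤ 1 + T / τ := by push_cast at hK ⊢; linarith

lemma le_ncard_burstInstants_inter_Ico (hτ : 0 < τ) {k : ℕ} (hk : 1 ≤ k) :
    k ≤ (burstInstants τ ∩ Ico (k ^ 2 * τ) (k ^ 2 * τ + τ)).ncard := by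
  have hsub : ↑((Finset.range k).image (burstPoint τ k)) ⊆
      burstInstants τ ∩ Ico (k ^ 2 * τ) (k ^ 2 * τ + τ) := by
    intro x hx
    obtain ⟨j, hj, rfl⟩ := Finset.mem_image.mp hx
    have hjk := Finset.mem_range.mp hj
    exact ⟨Or.inr ⟨k, j, hk, hjk, rfl⟩, sq_mul_le_burstPoint hτ.le k j, burstPoint_lt hτ hjk⟩
  calc k = ((Finset.range k).image (burstPoint τ k)).card := by
        rw [Finset.card_image_of_injective _ (burstPoint_strictMono hτ hk).injective,
          Finset.card_range]
    _ ≤ _ := by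
      rw [← ncard_coe_finset]
      exact ncard_le_ncard hsub ((burstInstants_finite_le hτ _).subset
        (inter_subset_inter_right _ fun x hx => hx.2.le))

variable {I : Type*} {a b : I}

noncomputable def burstSignal (hab : a ≠ b) (hτ : 0 < τ) : SwitchingSignal I :=
  .alternating hab (burstInstants τ) (mem_insert 0 _) (burstInstants_nonneg hτ.le)
    (burstInstants_finite_le hτ)

lemma burstSignal_sbar (hab : a ≠ b) (hτ : 0 < τ) : Sbar τ (burstSignal hab hτ) := by
  refine ⟨1, (eventually_ge_atTop 0).mono fun t ht => ?_⟩
  have hle : Nsw (burstSignal hab hτ) 0 t ≤ (burstInstants τ ∩ Iic t).ncard :=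
    ncard_le_ncard (inter_subset_inter_right _ fun x hx => hx.2.le)
      (burstInstants_finite_le hτ t)
  have := ncard_burstInstants_inter_Iic_le hτ ht
  have : (Nsw (burstSignal hab hτ) 0 t : ℝ) ≤ (burstInstants τ ∩ Iic t).ncard := by
    exact_mod_cast hle
  linarith

lemma burstSignal_not_sadwInf (hab : a ≠ b) (hτ : 0 < τ) : ¬ SadwInf τ (burstSignal hab hτ) :=
  not_sadwInf_of_forall_lt_nsw hτ fun N =>
    ⟨((N + 2 : ℕ) : ℝ) ^ 2 * τ, by positivity,
      Nat.lt_of_lt_of_le (by omega) (le_ncard_burstInstants_inter_Ico hτ (k := N + 2) (by omega))⟩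

end Bursts

/-- `S∞_adw(τ) ⊆ S̄(τ)`, and the inclusion is strict. -/
theorem adwInf_subset_sbar_strict {I : Type*} [Nontrivial I] (τ : ℝ) (hτ : 0 < τ) :
    (∀ σ : SwitchingSignal I, SadwInf τ σ → Sbar τ σ) ∧
    (∃ σ : SwitchingSignal I, Sbar τ σ ∧ ¬ SadwInf τ σ) := by
  obtain ⟨a, b, hab⟩ := exists_pair_ne I
  exact ⟨fun σ hσ => hσ.sbar, burstSignal hab hτ, burstSignal_sbar hab hτ,
    burstSignal_not_sadwInf hab hτ⟩
end

section
/- Let τ > 0 and let σ ∈ S be periodic of period T > 0 (σ(t+T) = σ(t) for all t ≥ 0) with lim_{t→T⁻} σ(t) ≠ σ(0). Then the following are equivalent: (i) σ ∈ S̄(τ); (ii) N_σ(0,T) ≤ T/τ; (iii) σ ∈ S_adw(τ, N_σ(0,T)). -/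
/-!
The switching instants of a periodic signal are themselves periodic: a positive time is a
switching instant exactly when the signal is not eventually constant just to its left, a
property invariant under translation by the period, and the hypothesis on the left limit at
`T` says precisely that `T` is an instant. Hence every window of length `T` contains
`N_σ(0,T)` instants, so `N_σ(s,t) ≤ (⌊(t-s)/T⌋ + 1) N_σ(0,T)`, which gives (ii) ⇒ (iii);
(iii) ⇒ (i) is immediate, and (i) ⇒ (ii) because `N_σ(0,kT) - kT/τ = k (N_σ(0,T) - T/τ)`.
-/

open Filter Topology Set

namespace SwitchingSignal

variable {I : Type*} (σ : SwitchingSignal I)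

lemma finite_inter_Ico (s t : ℝ) : (σ.instants ∩ Ico s t).Finite :=
  (σ.finite_le t).subset (inter_subset_inter_right _ fun _ h => h.2.le)

lemma nsw_mono_right {s t t' : ℝ} (h : t ≤ t') : Nsw σ s t ≤ Nsw σ s t' :=
  ncard_le_ncard (inter_subset_inter_right _ (Ico_subset_Ico_right h)) (σ.finite_inter_Ico s t')

lemma nsw_add {s t u : ℝ} (hst : s ≤ t) (htu : t ≤ u) :
    Nsw σ s u = Nsw σ s t + Nsw σ t u := by
  have hdisj : Disjoint (σ.instants ∩ Ico s t) (σ.instants ∩ Ico t u) :=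
    (Ico_disjoint_Ico_same).mono inter_subset_right inter_subset_right
  rw [Nsw, Nsw, Nsw, ← ncard_union_eq hdisj (σ.finite_inter_Ico s t) (σ.finite_inter_Ico t u),
    ← inter_union_distrib_left, Ico_union_Ico_eq_Ico hst htu]

lemma exists_prev_instant {t : ℝ} (ht : 0 < t) :
    ∃ s ∈ σ.instants, s < t ∧ σ.instants ∩ Ioo s t = ∅ := by
  have hfin : (σ.instants ∩ Iio t).Finite :=
    (σ.finite_le t).subset (inter_subset_inter_right _ Iio_subset_Iic_self)
  obtain ⟨s, ⟨hs, hst⟩, hmax⟩ := hfin.exists_maximalFor id _ ⟨0, σ.zero_mem, ht⟩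
  refine ⟨s, hs, hst, eq_empty_of_forall_notMem fun r ⟨hr, hsr, hrt⟩ => ?_⟩
  exact (hmax ⟨hr, hrt⟩ hsr.le).not_gt hsr

lemma mem_instants_iff_not_eventually_eq {t : ℝ} (ht : 0 < t) :
    t ∈ σ.instants ↔ ¬ ∀ᶠ r in 𝓝[<] t, σ.toFun r = σ.toFun t := by
  obtain ⟨s, hs, hst, hgap⟩ := σ.exists_prev_instant ht
  have hs0 := σ.nonneg s hs
  have hnear : ∀ᶠ r in 𝓝[<] t, r ∈ Ioo s t := Ioo_mem_nhdsLT hst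
  constructor
  · intro htI heq
    obtain ⟨r, ⟨hsr, hrt⟩, hr⟩ := (hnear.and heq).exists
    have hsr_eq : σ.toFun s = σ.toFun r := σ.const_between s r hs0 hsr.le <|
      subset_empty_iff.1 (hgap ▸ inter_subset_inter_right _ (Ioc_subset_Ioo_right hrt))
    exact σ.jump t htI ht s hs0 hst hgap (hsr_eq.trans hr)
  · intro hne
    by_contra htI
    refine hne (hnear.mono fun r ⟨hsr, hrt⟩ =>
      σ.const_between r t (hs0.trans hsr.le) hrt.le ?_)
    refine eq_empty_of_forall_notMem fun x ⟨hx, hrx, hxt⟩ => ?_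
    rcases hxt.lt_or_eq with hxt | rfl
    · exact (hgap ▸ ⟨hx, hsr.trans hrx, hxt⟩ : x ∈ (∅ : Set ℝ))
    · exact htI hx

variable {T : ℝ}

def InstantsPeriodic (σ : SwitchingSignal I) (T : ℝ) : Prop :=
  ∀ t, 0 ≤ t → (t + T ∈ σ.instants ↔ t ∈ σ.instants)

lemma period_mem_instants (hT : 0 < T)
    (hper : ∀ t : ℝ, 0 ≤ t → σ.toFun (t + T) = σ.toFun t)
    (hleft : ∀ᶠ r in 𝓝[<] T, σ.toFun r ≠ σ.toFun 0) :
    T ∈ σ.instants := by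
  rw [σ.mem_instants_iff_not_eventually_eq hT]
  intro heq
  obtain ⟨r, hne, hr⟩ := (hleft.and heq).exists
  exact hne (hr.trans (by simpa using hper 0 le_rfl))

lemma instantsPeriodic_of_periodic (hper : ∀ t : ℝ, 0 ≤ t → σ.toFun (t + T) = σ.toFun t)
    (hT_mem : T ∈ σ.instants) : σ.InstantsPeriodic T := by
  intro t ht
  rcases ht.eq_or_lt with rfl | ht
  · simpa using iff_of_true hT_mem σ.zero_mem
  rw [σ.mem_instants_iff_not_eventually_eq (add_pos_of_pos_of_nonneg ht (σ.nonneg T hT_mem)),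
    σ.mem_instants_iff_not_eventually_eq ht, ← map_add_right_nhdsLT, eventually_map]
  refine not_congr (eventually_congr ?_)
  filter_upwards [Ioo_mem_nhdsLT ht] with r hr
  rw [hper r hr.1.le, hper t ht.le]

lemma nsw_add_period (hinst : σ.InstantsPeriodic T) {a b : ℝ} (ha : 0 ≤ a) :
    Nsw σ (a + T) (b + T) = Nsw σ a b := by
  have himage : (· + T) '' (σ.instants ∩ Ico a b) = σ.instants ∩ Ico (a + T) (b + T) := by
    ext x
    constructor
    · rintro ⟨y, ⟨hy, hay, hyb⟩, rfl⟩
      exact ⟨(hinst y (ha.trans hay)).2 hy, by linarith, by linarith⟩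
    · rintro ⟨hx, hax, hxb⟩
      refine ⟨x - T, ⟨(hinst _ (by linarith)).1 (by rwa [sub_add_cancel]), ?_, ?_⟩,
        sub_add_cancel x T⟩ <;> linarith
  rw [Nsw, Nsw, ← himage, ncard_image_of_injective _ (add_left_injective T)]

lemma nsw_add_nat_mul_period (hT : 0 ≤ T) (hinst : σ.InstantsPeriodic T)
    {a b : ℝ} (ha : 0 ≤ a) (k : ℕ) :
    Nsw σ (a + k * T) (b + k * T) = Nsw σ a b := by
  induction k with
  | zero => simp
  | succ k ih =>
    have hak : 0 ≤ a + k * T := by positivity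
    rw [← ih, ← σ.nsw_add_period hinst hak]
    push_cast
    ring_nf

lemma nsw_self_add_period_of_le (hinst : σ.InstantsPeriodic T)
    {a : ℝ} (ha : 0 ≤ a) (haT : a ≤ T) :
    Nsw σ a (a + T) = Nsw σ 0 T := by
  have hshift : Nsw σ T (a + T) = Nsw σ 0 a := by
    simpa using σ.nsw_add_period hinst le_rfl (b := a)
  rw [σ.nsw_add haT (by linarith), hshift, σ.nsw_add ha haT, add_comm]

lemma nsw_self_add_period (hT : 0 < T) (hinst : σ.InstantsPeriodic T)
    {a : ℝ} (ha : 0 ≤ a) : Nsw σ a (a + T) = Nsw σ 0 T := by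
  set k := ⌊a / T⌋₊
  have hk_le : k * T ≤ a := (le_div_iff₀ hT).1 (Nat.floor_le (by positivity))
  have hlt_k : a < (k + 1) * T := (div_lt_iff₀ hT).1 (Nat.lt_floor_add_one _)
  have hshift := σ.nsw_add_nat_mul_period hT.le hinst (sub_nonneg.2 hk_le) k (b := a - k * T + T)
  rw [sub_add_cancel, show a - k * T + T + k * T = a + T by ring] at hshift
  rw [hshift, σ.nsw_self_add_period_of_le hinst (sub_nonneg.2 hk_le) (by linarith)]

lemma nsw_self_add_nat_mul_period (hT : 0 < T) (hinst : σ.InstantsPeriodic T)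
    {s : ℝ} (hs : 0 ≤ s) (k : ℕ) :
    Nsw σ s (s + k * T) = k * Nsw σ 0 T := by
  induction k with
  | zero => simp [Nsw]
  | succ k ih =>
    have hsk : s ≤ s + k * T := by simp only [le_add_iff_nonneg_right]; positivity
    rw [Nat.cast_succ, add_one_mul, ← add_assoc,
      σ.nsw_add hsk (by linarith), ih, σ.nsw_self_add_period hT hinst (hs.trans hsk), add_one_mul]

lemma nsw_le_floor_add_one_mul (hT : 0 < T) (hinst : σ.InstantsPeriodic T)
    {s t : ℝ} (hs : 0 ≤ s) :
    Nsw σ s t ≤ (⌊(t - s) / T⌋₊ + 1) * Nsw σ 0 T := by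
  have ht : t ≤ s + ((⌊(t - s) / T⌋₊ + 1 : ℕ) : ℝ) * T := by
    have := (div_lt_iff₀ hT).1 (Nat.lt_floor_add_one ((t - s) / T))
    push_cast
    linarith
  exact (σ.nsw_mono_right ht).trans (σ.nsw_self_add_nat_mul_period hT hinst hs _).le

lemma nsw_period_le_of_sbar (hT : 0 < T) (hinst : σ.InstantsPeriodic T)
    {τ : ℝ} (h : Sbar τ σ) : (Nsw σ 0 T : ℝ) ≤ T / τ := by
  obtain ⟨C, hC⟩ := h
  have hbound : ∀ᶠ k : ℕ in atTop, (k : ℝ) * ((Nsw σ 0 T : ℝ) - T / τ) ≤ C := by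
    filter_upwards [(tendsto_natCast_atTop_atTop.atTop_mul_const hT).eventually hC] with k hk
    rw [← zero_add ((k : ℝ) * T), σ.nsw_self_add_nat_mul_period hT hinst le_rfl] at hk
    push_cast [zero_add] at hk
    linarith [mul_div_assoc (k : ℝ) T τ]
  by_contra! hlt
  obtain ⟨k, hk, hk'⟩ := (hbound.and
    ((tendsto_natCast_atTop_atTop.atTop_mul_const (sub_pos.2 hlt)).eventually_gt_atTop C)).exists
  exact hk.not_gt hk'

lemma sadw_of_nsw_period_le (hT : 0 < T) (hinst : σ.InstantsPeriodic T)
    {τ : ℝ} (hτ : 0 < τ) (hle : (Nsw σ 0 T : ℝ) ≤ T / τ) :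
    Sadw τ (Nsw σ 0 T) σ := by
  intro s t hs hst
  set k := ⌊(t - s) / T⌋₊
  have hkT : k * T ≤ t - s := (le_div_iff₀ hT).1 (Nat.floor_le (div_nonneg (by linarith) hT.le))
  calc (Nsw σ s t : ℝ) ≤ (k + 1) * Nsw σ 0 T := by
        exact_mod_cast σ.nsw_le_floor_add_one_mul hT hinst hs
    _ ≤ Nsw σ 0 T + k * (T / τ) := by rw [add_one_mul, add_comm]; gcongr
    _ = Nsw σ 0 T + k * T / τ := by ring
    _ ≤ Nsw σ 0 T + (t - s) / τ := by gcongr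

lemma sbar_of_sadw {τ : ℝ} {N₀ : ℕ} (h : Sadw τ N₀ σ) : Sbar τ σ :=
  ⟨N₀, (eventually_ge_atTop 0).mono fun t ht => by
    simpa using sub_le_iff_le_add.2 (h 0 t le_rfl ht)⟩

end SwitchingSignal

/-- For a periodic signal `σ` of period `T` whose left limit at `T` differs from `σ(0)`:
`σ ∈ S̄(τ)` iff `N_σ(0,T) ≤ T/τ` iff `σ ∈ S_adw(τ, N_σ(0,T))`. -/
theorem periodic_sbar_iff {I : Type*} (τ T : ℝ) (hτ : 0 < τ) (hT : 0 < T)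
    (σ : SwitchingSignal I)
    (hper : ∀ t : ℝ, 0 ≤ t → σ.toFun (t + T) = σ.toFun t)
    (hleft : ∀ᶠ r in nhdsWithin T (Set.Iio T), σ.toFun r ≠ σ.toFun 0) :
    (Sbar τ σ ↔ (Nsw σ 0 T : ℝ) ≤ T / τ) ∧
    (Sbar τ σ ↔ Sadw τ (Nsw σ 0 T) σ) := by
  have hinst : σ.InstantsPeriodic T :=
    σ.instantsPeriodic_of_periodic hper (σ.period_mem_instants hT hper hleft)
  have h12 : Sbar τ σ → (Nsw σ 0 T : ℝ) ≤ T / τ := σ.nsw_period_le_of_sbar hT hinst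
  have h23 : (Nsw σ 0 T : ℝ) ≤ T / τ → Sadw τ (Nsw σ 0 T) σ :=
    σ.sadw_of_nsw_period_le hT hinst hτ
  have h31 : Sadw τ (Nsw σ 0 T) σ → Sbar τ σ := σ.sbar_of_sadw
  exact ⟨⟨h12, h31 ∘ h23⟩, ⟨h23 ∘ h12, h31⟩⟩
end

section
/- Let {f_i}_{i∈I} be well-posed and let τ > 0. The switched system ẋ = f_{σ(t)}(x) is UGAS w.r.t. S∞_adw(τ) if and only if it is UGAS w.r.t. the class S of all switching signals. Similarly, for every ρ > 0, it is UGES_ρ w.r.t. S∞_adw(τ) if and only if it is UGES_ρ w.r.t. S. -/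
/-!
Only the passage from `S∞_adw(τ)` to all signals needs an argument. Fix a signal `σ`, a solution
`x` relative to it and a time `t`. The signal that follows `σ` up to `t` and then stays in mode
`σ(t)` forever has finitely many switching instants, say `N`, so it lies in `S_adw(τ, N)`; by
well-posedness, `x` restricted to `[0, t]` and continued by the flow of mode `σ(t)` is a solution
relative to it. Hence the stability estimate at time `t`, with the same `β` (resp. `M`), transfers
to `x`.
-/

open Set Filter Topology

namespace SwitchingSignal

variable {I : Type*}

def truncate (σ : SwitchingSignal I) (t : ℝ) (ht : 0 ≤ t) : SwitchingSignal I where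
  toFun s := σ.toFun (min s t)
  instants := σ.instants ∩ Iic t
  zero_mem := ⟨σ.zero_mem, ht⟩
  nonneg a ha := σ.nonneg a ha.1
  finite_le _ := (σ.finite_le t).subset fun _ ha => ⟨ha.1.1, ha.1.2⟩
  const_between := by
    intro s u hs hsu hempty
    rw [eq_empty_iff_forall_notMem] at hempty
    rcases le_or_gt u t with hut | htu
    · rw [min_eq_left (hsu.trans hut), min_eq_left hut]
      refine σ.const_between s u hs hsu (eq_empty_iff_forall_notMem.2 fun a ha => ?_)
      exact hempty a ⟨⟨ha.1, ha.2.2.trans hut⟩, ha.2⟩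
    rcases le_or_gt t s with hts | hst
    · rw [min_eq_right hts, min_eq_right htu.le]
    rw [min_eq_left hst.le, min_eq_right htu.le]
    refine σ.const_between s t hs hst.le (eq_empty_iff_forall_notMem.2 fun a ha => ?_)
    exact hempty a ⟨⟨ha.1, ha.2.2⟩, ha.2.1, ha.2.2.trans htu.le⟩
  jump := by
    intro u hu hu0 s hs hsu hempty
    have hut : u ≤ t := hu.2
    rw [min_eq_left (hsu.le.trans hut), min_eq_left hut]
    refine σ.jump u hu.1 hu0 s hs hsu (eq_empty_iff_forall_notMem.2 fun a ha => ?_)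
    exact (eq_empty_iff_forall_notMem.1 hempty) a ⟨⟨ha.1, ha.2.2.le.trans hut⟩, ha.2⟩

theorem sadwInf_truncate (σ : SwitchingSignal I) {t τ : ℝ} (ht : 0 ≤ t) (hτ : 0 ≤ τ) :
    SadwInf τ (σ.truncate t ht) := by
  refine ⟨(σ.instants ∩ Iic t).ncard, fun s u _ hsu => ?_⟩
  have hcount : Nsw (σ.truncate t ht) s u ≤ (σ.instants ∩ Iic t).ncard :=
    ncard_le_ncard inter_subset_left (σ.finite_le t)
  have hslack : 0 ≤ (u - s) / τ := div_nonneg (sub_nonneg.2 hsu) hτ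
  exact le_add_of_le_of_nonneg (Nat.cast_le.2 hcount) hslack

end SwitchingSignal

section Solutions

variable {I : Type*} {n : ℕ} {f : I → EuclideanSpace ℝ (Fin n) → EuclideanSpace ℝ (Fin n)}

theorem IsSubSolution.continuousOn_comp_sub {i : I} {z : ℝ → EuclideanSpace ℝ (Fin n)}
    (hz : IsSubSolution f i z) (t : ℝ) : ContinuousOn (fun s => z (s - t)) (Ici t) :=
  hz.1.comp (continuous_sub_right t).continuousOn fun _ hs => mem_Ici.2 (sub_nonneg.2 hs)

theorem IsSubSolution.hasDerivWithinAt_comp_sub {i : I} {z : ℝ → EuclideanSpace ℝ (Fin n)}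
    (hz : IsSubSolution f i z) {t u : ℝ} (hu : t ≤ u) :
    HasDerivWithinAt (fun s => z (s - t)) (f i (z (u - t))) (Ici u) u := by
  have hshift : HasDerivWithinAt (fun s : ℝ => s - t) 1 (Ici u) u :=
    (hasDerivWithinAt_id u _).sub_const t
  have h := (hz.2 (u - t) (sub_nonneg.2 hu)).scomp u hshift
    fun s (hs : u ≤ s) => sub_le_sub_right hs t
  rwa [one_smul] at h

theorem IsSolution.truncate {σ : SwitchingSignal I} {x z : ℝ → EuclideanSpace ℝ (Fin n)}
    (hx : IsSolution f σ x) {t : ℝ} (ht : 0 ≤ t) (hz : IsSubSolution f (σ.toFun t) z)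
    (hz0 : z 0 = x t) :
    IsSolution f (σ.truncate t ht) (fun s => if s ≤ t then x s else z (s - t)) := by
  set y : ℝ → EuclideanSpace ℝ (Fin n) := fun s => if s ≤ t then x s else z (s - t)
  have hy_past : EqOn y x (Iic t) := fun s hs => if_pos hs
  have hy_future : EqOn y (fun s => z (s - t)) (Ici t) := by
    intro s hs
    rcases (mem_Ici.1 hs).eq_or_lt with rfl | hts
    · simp [y, hz0]
    · simp [y, not_le.2 hts]
  refine ⟨?_, fun u hu => ?_⟩
  · refine ContinuousOn.mono ?_ (Ici_subset_Icc_union_Ici (b := t))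
    exact ((hx.1.mono Icc_subset_Ici_self).congr fun s hs => hy_past hs.2).union_of_isClosed
      ((hz.continuousOn_comp_sub t).congr hy_future) isClosed_Icc isClosed_Ici
  rcases lt_or_ge u t with hut | htu
  · have hmode : (σ.truncate t ht).toFun u = σ.toFun u := congrArg σ.toFun (min_eq_left hut.le)
    rw [hmode, hy_past hut.le]
    refine (hx.2 u hu).congr_of_eventuallyEq ?_ (hy_past hut.le)
    filter_upwards [mem_nhdsWithin_of_mem_nhds (Iio_mem_nhds hut)] with s hs
    exact hy_past (mem_Iic.2 (mem_Iio.1 hs).le)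
  · have hmode : (σ.truncate t ht).toFun u = σ.toFun t := congrArg σ.toFun (min_eq_right htu)
    rw [hmode, hy_future htu]
    exact (hz.hasDerivWithinAt_comp_sub htu).congr (fun s hs => hy_future (htu.trans hs))
      (hy_future htu)

end Solutions

section Stability

variable {I : Type*} {n : ℕ} {f : I → EuclideanSpace ℝ (Fin n) → EuclideanSpace ℝ (Fin n)}

def RealizesEndpoints (f : I → EuclideanSpace ℝ (Fin n) → EuclideanSpace ℝ (Fin n))
    (S : SwitchingSignal I → Prop) : Prop :=
  ∀ σ x, IsSolution f σ x → ∀ t : ℝ, 0 ≤ t →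
    ∃ σ' x', S σ' ∧ IsSolution f σ' x' ∧ x' 0 = x 0 ∧ x' t = x t

theorem realizesEndpoints_sadwInf (F : WellPosed f) {τ : ℝ} (hτ : 0 ≤ τ) :
    RealizesEndpoints f (SadwInf τ) := fun σ x hx t ht =>
  ⟨σ.truncate t ht, _, σ.sadwInf_truncate ht hτ,
    hx.truncate ht (F.isSol (σ.toFun t) (x t)) (F.init _ _), if_pos ht, by simp⟩

theorem UGAS.mono {S S' : SwitchingSignal I → Prop} (hS : ∀ σ, S' σ → S σ) (h : UGAS f S) :
    UGAS f S' :=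
  let ⟨β, hβ, hbound⟩ := h
  ⟨β, hβ, fun σ hσ => hbound σ (hS σ hσ)⟩

theorem UGES.mono {ρ : ℝ} {S S' : SwitchingSignal I → Prop} (hS : ∀ σ, S' σ → S σ)
    (h : UGES f ρ S) : UGES f ρ S' :=
  let ⟨M, hM, hbound⟩ := h
  ⟨M, hM, fun σ hσ => hbound σ (hS σ hσ)⟩

theorem UGAS.of_realizesEndpoints {S : SwitchingSignal I → Prop} (hS : RealizesEndpoints f S)
    (h : UGAS f S) : UGAS f fun _ => True := by
  obtain ⟨β, hβ, hbound⟩ := h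
  refine ⟨β, hβ, fun σ _ x hx t ht => ?_⟩
  obtain ⟨σ', x', hσ', hx', h0, ht'⟩ := hS σ x hx t ht
  simpa only [h0, ht'] using hbound σ' hσ' x' hx' t ht

theorem UGES.of_realizesEndpoints {ρ : ℝ} {S : SwitchingSignal I → Prop}
    (hS : RealizesEndpoints f S) (h : UGES f ρ S) : UGES f ρ fun _ => True := by
  obtain ⟨M, hM, hbound⟩ := h
  refine ⟨M, hM, fun σ _ x hx t ht => ?_⟩
  obtain ⟨σ', x', hσ', hx', h0, ht'⟩ := hS σ x hx t ht
  simpa only [h0, ht'] using hbound σ' hσ' x' hx' t ht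

end Stability

/-- UGAS (resp. UGES_ρ) w.r.t. `S∞_adw(τ)` is equivalent to UGAS (resp. UGES_ρ)
w.r.t. the class of all switching signals. -/
theorem ugas_adwInf_iff_arbitrary {m n : ℕ}
    (f : Fin m → EuclideanSpace ℝ (Fin n) → EuclideanSpace ℝ (Fin n))
    (F : WellPosed f) (τ : ℝ) (hτ : 0 < τ) :
    (UGAS f (SadwInf τ) ↔ UGAS f (fun _ => True)) ∧
    (∀ ρ : ℝ, 0 < ρ → (UGES f ρ (SadwInf τ) ↔ UGES f ρ (fun _ => True))) := by
  have hS := realizesEndpoints_sadwInf F hτ.le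
  exact ⟨⟨UGAS.of_realizesEndpoints hS, UGAS.mono fun _ _ => trivial⟩,
    fun _ _ => ⟨UGES.of_realizesEndpoints hS, UGES.mono fun _ _ => trivial⟩⟩
end

section
/- Let f₁,…,f_m : ℝⁿ → ℝⁿ with f_i(0) = 0 and let τ > 0. If the switched system ẋ = f_{σ(t)}(x) is τ-UGB, then for every λ > 0 there exist η̃₁, η̃₂ ∈ K∞ and α̃ ≥ 0 such that ‖x(t)‖ ≤ η̃₁(e^{α̃τ N_σ(0,t)} e^{−(λ+α̃)t} η̃₂(‖x(0)‖)) for every σ ∈ S, every solution x relative to σ and every t ≥ 0. -/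
/-!
Raising the `τ`-UGB estimate to the power `λ` multiplies every exponent by `λ`, turning the decay
rate `1 + α` into `λ + λα`; this is absorbed by composing `η₁` with `r ↦ r ^ λ⁻¹` and `η₂` with
`s ↦ s ^ λ`, both of which stay in `K∞`.
-/

open Real

namespace IsClassKInf

lemma nonneg {g : ℝ → ℝ} (hg : IsClassKInf g) {r : ℝ} (hr : 0 ≤ r) : 0 ≤ g r :=
  hg.1.2.1 ▸ hg.1.2.2.monotoneOn Set.self_mem_Ici hr hr

lemma comp {g h : ℝ → ℝ} (hg : IsClassKInf g) (hh : IsClassKInf h) :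
    IsClassKInf (fun r => g (h r)) := by
  have hmaps : Set.MapsTo h (Set.Ici 0) (Set.Ici 0) := fun r hr => hh.nonneg hr
  refine ⟨⟨hg.1.1.comp hh.1.1 hmaps, by simp [hh.1.2.1, hg.1.2.1],
    fun a ha b hb hab => hg.1.2.2 (hmaps ha) (hmaps hb) (hh.1.2.2 ha hb hab)⟩, fun M => ?_⟩
  obtain ⟨r₁, hr₁, hMr₁⟩ := hg.2 M
  obtain ⟨r₂, hr₂, hr₁r₂⟩ := hh.2 r₁
  exact ⟨r₂, hr₂, hMr₁.trans (hg.1.2.2.monotoneOn hr₁ (hmaps hr₂) hr₁r₂)⟩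

end IsClassKInf

lemma isClassKInf_rpow {p : ℝ} (hp : 0 < p) : IsClassKInf (fun r : ℝ => r ^ p) := by
  refine ⟨⟨fun x _ => (continuousAt_rpow_const x p (Or.inr hp.le)).continuousWithinAt,
    zero_rpow hp.ne', fun a ha b _ hab => rpow_lt_rpow ha hab hp⟩, fun M => ?_⟩
  refine ⟨max M 0 ^ p⁻¹, rpow_nonneg (le_max_right _ _) _, ?_⟩
  show M ≤ (max M 0 ^ p⁻¹) ^ p
  rw [rpow_inv_rpow (le_max_right _ _) hp.ne']
  exact le_max_left _ _

lemma exp_mul_exp_mul_eq_rpow_inv {a b c lam : ℝ} (hc : 0 ≤ c) (hlam : lam ≠ 0) :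
    exp a * exp b * c = (exp (lam * a) * exp (lam * b) * c ^ lam) ^ lam⁻¹ := by
  rw [mul_comm lam a, mul_comm lam b, exp_mul, exp_mul, ← mul_rpow (exp_pos a).le (exp_pos b).le,
    ← mul_rpow (by positivity) hc, rpow_rpow_inv (by positivity) hlam]

theorem tauUGB_speed_transformation_general {m n : ℕ}
    (f : Fin m → EuclideanSpace ℝ (Fin n) → EuclideanSpace ℝ (Fin n))
    (τ : ℝ) (h : TauUGB f τ) :
    ∀ lam : ℝ, 0 < lam →
      ∃ η₁ η₂ : ℝ → ℝ, ∃ αt : ℝ, IsClassKInf η₁ ∧ IsClassKInf η₂ ∧ 0 ≤ αt ∧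
        ∀ σ : SwitchingSignal (Fin m), ∀ x : ℝ → EuclideanSpace ℝ (Fin n),
          IsSolution f σ x → ∀ t : ℝ, 0 ≤ t →
            ‖x t‖ ≤ η₁ (Real.exp (αt * τ * (Nsw σ 0 t : ℝ)) *
              Real.exp (-(lam + αt) * t) * η₂ ‖x 0‖) := by
  obtain ⟨η₁, η₂, α, hη₁, hη₂, hα, hbound⟩ := h
  intro lam hlam
  refine ⟨fun r => η₁ (r ^ lam⁻¹), fun s => η₂ s ^ lam, lam * α,
    hη₁.comp (isClassKInf_rpow (inv_pos.2 hlam)), (isClassKInf_rpow hlam).comp hη₂,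
    by positivity, fun σ x hx t ht => ?_⟩
  calc ‖x t‖ ≤ η₁ (exp (α * τ * Nsw σ 0 t) * exp (-(1 + α) * t) * η₂ ‖x 0‖) :=
        hbound σ x hx t ht
    _ = η₁ ((exp (lam * α * τ * Nsw σ 0 t) * exp (-(lam + lam * α) * t) *
          η₂ ‖x 0‖ ^ lam) ^ lam⁻¹) := by
        rw [exp_mul_exp_mul_eq_rpow_inv (hη₂.nonneg (norm_nonneg _)) hlam.ne']
        ring_nf

/-- Speed transformation: if the switched system is `τ`-UGB, then the decay rate `1`
in the defining estimate can be replaced by any `λ > 0`. -/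
theorem tauUGB_speed_transformation {m n : ℕ}
    (f : Fin m → EuclideanSpace ℝ (Fin n) → EuclideanSpace ℝ (Fin n))
    (hf0 : ∀ i, f i 0 = 0) (τ : ℝ) (hτ : 0 < τ) (h : TauUGB f τ) :
    ∀ lam : ℝ, 0 < lam →
      ∃ η₁ η₂ : ℝ → ℝ, ∃ αt : ℝ, IsClassKInf η₁ ∧ IsClassKInf η₂ ∧ 0 ≤ αt ∧
        ∀ σ : SwitchingSignal (Fin m), ∀ x : ℝ → EuclideanSpace ℝ (Fin n),
          IsSolution f σ x → ∀ t : ℝ, 0 ≤ t →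
            ‖x t‖ ≤ η₁ (Real.exp (αt * τ * (Nsw σ 0 t : ℝ)) *
              Real.exp (-(lam + αt) * t) * η₂ ‖x 0‖) :=
  tauUGB_speed_transformation_general f τ h
end

section
/- Let {f_i}_{i∈I} be well-posed and let τ > 0. Suppose there exist W₁,…,W_m ∈ Lip₀(ℝⁿ,ℝ), α̃₁, α̃₂ ∈ K∞ and α ≥ 0 such that for all i, j ∈ I and all x ∈ ℝⁿ: (a) α̃₁(‖x‖) ≤ W_i(x) ≤ α̃₂(‖x‖); (b) D⁺_{f_i}W_i(x) ≤ −(1+α) W_i(x); (c) W_i(x) ≤ e^{ατ} W_j(x). Then for every switching signal σ ∈ S, every solution x of the switched system relative to σ and every t ≥ 0, one has W_{σ(t)}(x(t)) ≤ e^{ατ N_σ(0,t)} e^{−(1+α)t} W_{σ(0)}(x(0)); consequently ‖x(t)‖ ≤ α̃₁⁻¹(e^{ατ N_σ(0,t)} e^{−(1+α)t} α̃₂(‖x(0)‖)), and the switched system is τ-UGB. -/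
/-!
Between two switching instants a solution of the switched system is, by uniqueness, a trajectory
of the active subsystem, so the Dini condition (b) integrates (Grönwall) to exponential decay of
the active `W_i` at rate `1 + α`. At a switching instant the active function changes, which by (c)
costs a factor `e^{ατ}`. Chaining the two over the finitely many instants in `(0, t]`, of which
there are at most `N_σ(0, t)` because `0` is counted as well, gives the estimate on
`W_{σ(t)}(x(t))`; the sandwich (a) and a `K∞` left inverse of `α̃₁` turn it into the state bound,
that is, `τ`-UGB with `η₁ = α̃₁⁻¹` and `η₂ = α̃₂`.
-/

open Set Filter Real Topology

theorem IsClassK.nonneg {a : ℝ → ℝ} (ha : IsClassK a) {r : ℝ} (hr : 0 ≤ r) : 0 ≤ a r :=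
  ha.2.1 ▸ ha.2.2.monotoneOn self_mem_Ici hr hr

theorem IsClassKInf.exists_leftInverse {a : ℝ → ℝ} (ha : IsClassKInf a) :
    ∃ η : ℝ → ℝ, IsClassKInf η ∧ Monotone η ∧ ∀ r, 0 ≤ r → η (a r) = r := by
  obtain ⟨hK, ha_unbdd⟩ := ha
  have ⟨ha_cont, ha_zero, ha_mono⟩ := hK
  -- extend `a` by the identity on `(-∞, 0]` to get an order automorphism of `ℝ`
  set A : ℝ → ℝ := fun y => if y ≤ 0 then y else a y
  have hA_nonneg : ∀ r, 0 ≤ r → A r = a r := fun r hr => by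
    rcases hr.eq_or_lt with rfl | hr
    · simp [A, ha_zero]
    · simp [A, hr.not_ge]
  have hA_mono : StrictMono A := by
    refine StrictMonoOn.Iic_union_Ici (a := 0) (fun u hu v hv huv => ?_) ?_
    · simpa [A, show u ≤ 0 from hu, show v ≤ 0 from hv] using huv
    · exact ha_mono.congr fun r hr => (hA_nonneg r hr).symm
  have hA_surj : Function.Surjective A := by
    intro w
    rcases le_or_gt w 0 with hw | hw
    · exact ⟨w, by simp [A, hw]⟩
    obtain ⟨r, hr, hwr⟩ := ha_unbdd w
    obtain ⟨u, hu, rfl⟩ := intermediate_value_Icc hr (ha_cont.mono fun u hu => hu.1)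
      ⟨by rw [ha_zero]; exact hw.le, hwr⟩
    exact ⟨u, hA_nonneg u hu.1⟩
  set e := hA_mono.orderIsoOfSurjective A hA_surj
  have he_symm : ∀ r, 0 ≤ r → e.symm (a r) = r := fun r hr => by
    rw [← hA_nonneg r hr]
    exact e.symm_apply_apply r
  refine ⟨e.symm, ⟨⟨e.symm.continuous.continuousOn, ?_, e.symm.strictMono.strictMonoOn _⟩,
    fun M => ⟨a (max M 0), ?_, ?_⟩⟩, e.symm.monotone, he_symm⟩
  · simpa [ha_zero] using he_symm 0 le_rfl
  · exact hK.nonneg (le_max_right M 0)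
  · rw [he_symm _ (le_max_right M 0)]
    exact le_max_left M 0

namespace SwitchingSignal

variable {I : Type*} (σ : SwitchingSignal I)

theorem finite_inter_Ioc (s t : ℝ) : (σ.instants ∩ Ioc s t).Finite :=
  (σ.finite_le t).subset fun _ hu => ⟨hu.1, hu.2.2⟩

theorem toFun_eq_of_inter_Ioo_eq_empty {s r u : ℝ} (hs : 0 ≤ s)
    (hsr : σ.instants ∩ Ioo s r = ∅) (hu : u ∈ Ico s r) : σ.toFun u = σ.toFun s :=
  (σ.const_between s u hs hu.1 <| subset_empty_iff.1 <| hsr ▸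
    inter_subset_inter_right _ fun _ hv => ⟨hv.1, hv.2.trans_lt hu.2⟩).symm

theorem ncard_inter_Ioc_zero_le_Nsw (t : ℝ) : (σ.instants ∩ Ioc 0 t).ncard ≤ Nsw σ 0 t := by
  rcases le_or_gt t 0 with ht | ht
  · simp [Ioc_eq_empty_of_le ht]
  -- the instant `0` counted by `Nsw` compensates for a possible instant at `t`
  have hIoc : σ.instants ∩ Ioc 0 t ⊆ insert t (σ.instants ∩ Ioo 0 t) := by
    rintro u ⟨hu, hu0, hut⟩
    rcases hut.eq_or_lt with rfl | hut
    exacts [mem_insert _ _, mem_insert_of_mem _ ⟨hu, hu0, hut⟩]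
  have hIco : insert 0 (σ.instants ∩ Ioo 0 t) ⊆ σ.instants ∩ Ico 0 t := by
    rintro u (rfl | ⟨hu, hu0, hut⟩)
    exacts [⟨σ.zero_mem, le_rfl, ht⟩, ⟨hu, hu0.le, hut⟩]
  have hfin : (σ.instants ∩ Ioo 0 t).Finite := (σ.finite_inter_Ioc 0 t).subset
    (inter_subset_inter_right _ Ioo_subset_Ioc_self)
  calc (σ.instants ∩ Ioc 0 t).ncard
      ≤ (insert t (σ.instants ∩ Ioo 0 t)).ncard := ncard_le_ncard hIoc (hfin.insert t)
    _ ≤ (σ.instants ∩ Ioo 0 t).ncard + 1 := ncard_insert_le _ _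
    _ = (insert 0 (σ.instants ∩ Ioo 0 t)).ncard :=
      (ncard_insert_of_notMem (fun h => lt_irrefl 0 h.2.1) hfin).symm
    _ ≤ Nsw σ 0 t := ncard_le_ncard hIco
      ((σ.finite_le t).subset fun _ hu => ⟨hu.1, hu.2.2.le⟩)

end SwitchingSignal

theorem Lip0.continuous_of_classK_bounds {n : ℕ} {W : EuclideanSpace ℝ (Fin n) → ℝ}
    {a₁ a₂ : ℝ → ℝ} (hW : Lip0 W) (ha₁ : IsClassK a₁) (ha₂ : IsClassK a₂) (h₁ : ∀ x, a₁ ‖x‖ ≤ W x)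
    (h₂ : ∀ x, W x ≤ a₂ ‖x‖) : Continuous W := by
  refine continuous_iff_continuousAt.2 fun x => ?_
  rcases eq_or_ne x 0 with rfl | hx
  · have hW0 : W 0 = 0 :=
      le_antisymm (by simpa [ha₂.2.1] using h₂ 0) (by simpa [ha₁.2.1] using h₁ 0)
    have ha₂_lim : Tendsto (fun y : EuclideanSpace ℝ (Fin n) => a₂ ‖y‖) (𝓝 0) (𝓝 0) := by
      have := (ha₂.1 0 self_mem_Ici).tendsto.comp
        (tendsto_nhdsWithin_of_tendsto_nhds_of_eventually_within _
          (continuous_norm.tendsto' (0 : EuclideanSpace ℝ (Fin n)) 0 norm_zero)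
          (Eventually.of_forall fun y => norm_nonneg y))
      rwa [ha₂.2.1] at this
    rw [ContinuousAt, hW0]
    exact squeeze_zero (fun y => (ha₁.nonneg (norm_nonneg y)).trans (h₁ y)) h₂ ha₂_lim
  · obtain ⟨K, s, hs, hlip⟩ := hW x hx
    exact hlip.continuousOn.continuousAt hs

namespace WellPosed

variable {I : Type*} {n : ℕ} {f : I → EuclideanSpace ℝ (Fin n) → EuclideanSpace ℝ (Fin n)}
  (F : WellPosed f) {i : I} {x : ℝ → EuclideanSpace ℝ (Fin n)} {a b : ℝ}

theorem isSubSolution_extend (hx : ContinuousOn x (Icc a b))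
    (hderiv : ∀ u ∈ Ico a b, HasDerivWithinAt x (f i (x u)) (Ici u) u) :
    IsSubSolution f i fun h => if h ≤ b - a then x (a + h) else F.Φ i (h - (b - a)) (x b) := by
  set c := b - a
  have hac : a + c = b := by ring
  have hflow_eq : ∀ h, c ≤ h →
      (if h ≤ c then x (a + h) else F.Φ i (h - c) (x b)) = F.Φ i (h - c) (x b) := by
    intro h hch
    split_ifs with hhc
    · rw [le_antisymm hhc hch, hac, sub_self, F.init]
    · rfl
  constructor
  · refine ContinuousOn.if (fun h hh => ?_) ?_ ?_
    · have hhc : h = c := frontier_le_subset_eq continuous_id continuous_const hh.2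
      rw [hhc, hac, sub_self, F.init]
    · refine hx.comp (by fun_prop) fun h hh => ?_
      have hhc : h ≤ c := isClosed_Iic.closure_subset hh.2
      constructor <;> linarith [mem_Ici.1 hh.1]
    · refine (F.isSol i (x b)).1.comp (by fun_prop) fun h hh => ?_
      simp only [not_le] at hh
      exact sub_nonneg.2 (closure_lt_subset_le continuous_const continuous_id hh.2)
  · intro t ht
    rcases lt_or_ge t c with htc | htc
    · have hxt : HasDerivWithinAt (fun h => x (a + h)) (f i (x (a + t))) (Ici t) t := by
        simpa [Function.comp_def] using (hderiv (a + t) ⟨by linarith, by linarith⟩).scomp t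
          ((hasDerivAt_id t).const_add a).hasDerivWithinAt fun u hu => by
            simp only [mem_Ici] at hu ⊢; linarith
      simp only [if_pos htc.le]
      exact hxt.congr_of_eventuallyEq (eventually_nhdsWithin_of_eventually_nhds
        (eventually_le_nhds htc) |>.mono fun h hh => if_pos hh) (if_pos htc.le)
    · have hΦt : HasDerivWithinAt (fun h => F.Φ i (h - c) (x b)) (f i (F.Φ i (t - c) (x b)))
          (Ici t) t := by
        simpa [Function.comp_def] using ((F.isSol i (x b)).2 (t - c) (by linarith)).scomp t
          ((hasDerivAt_id t).sub_const c).hasDerivWithinAt fun u hu => by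
            simp only [mem_Ici, id_eq] at hu ⊢; linarith
      beta_reduce
      rw [hflow_eq t htc]
      exact hΦt.congr (fun u hu => hflow_eq u (htc.trans hu)) (hflow_eq t htc)

theorem eq_flow_of_hasDerivWithinAt (hx : ContinuousOn x (Icc a b))
    (hderiv : ∀ u ∈ Ico a b, HasDerivWithinAt x (f i (x u)) (Ici u) u)
    {h : ℝ} (hh : h ∈ Icc 0 (b - a)) : x (a + h) = F.Φ i h (x a) := by
  have hab : a ≤ b := by linarith [hh.1.trans hh.2]
  simpa [if_pos hh.2] using F.unique i (x a) _ (F.isSubSolution_extend hx hderiv)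
    (by simp [sub_nonneg.2 hab]) h hh.1

theorem frequently_slope_lt_of_dini_lt (hx : ContinuousOn x (Icc a b))
    (hderiv : ∀ u ∈ Ico a b, HasDerivWithinAt x (f i (x u)) (Ici u) u)
    {V : EuclideanSpace ℝ (Fin n) → ℝ} {u r : ℝ} (hu : u ∈ Ico a b)
    (hr : dini (F.Φ i) V (x u) < r) :
    ∃ᶠ z in 𝓝[>] u, (z - u)⁻¹ * (V (x z) - V (x u)) < r := by
  have hflow : ∀ h ∈ Icc 0 (b - u), x (u + h) = F.Φ i h (x u) :=
    fun h hh => F.eq_flow_of_hasDerivWithinAt (hx.mono (Icc_subset_Icc_left hu.1))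
      (fun v hv => hderiv v ⟨hu.1.trans hv.1, hv.2⟩) hh
  have hslope : ∀ᶠ h in 𝓝[>] (0 : ℝ), h⁻¹ * (V (x (u + h)) - V (x u)) < r := by
    filter_upwards [eventually_lt_of_limsup_lt hr, Ioc_mem_nhdsGT (sub_pos.2 hu.2)]
      with h hquot hh
    rw [hflow h (Ioc_subset_Icc_self hh), inv_mul_eq_div]
    exact_mod_cast hquot
  rw [← zero_add u, ← Filter.map_add_right_nhdsGT] at *
  refine (Filter.eventually_map.2 ?_).frequently
  simpa [add_comm] using hslope

theorem le_exp_mul_of_dini_le {V : EuclideanSpace ℝ (Fin n) → ℝ} (hV : Continuous V) {c : ℝ}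
    (hdec : ∀ y, dini (F.Φ i) V y ≤ ((-(c * V y) : ℝ) : EReal))
    (hx : ContinuousOn x (Icc a b))
    (hderiv : ∀ u ∈ Ico a b, HasDerivWithinAt x (f i (x u)) (Ici u) u) (hab : a ≤ b) :
    V (x b) ≤ exp (-c * (b - a)) * V (x a) := by
  have := le_gronwallBound_of_liminf_deriv_right_le (f' := fun u => -c * V (x u)) (K := -c)
    (ε := 0) (hV.comp_continuousOn hx)
    (fun u hu r hr => F.frequently_slope_lt_of_dini_lt hx hderiv hu
      ((hdec (x u)).trans_lt (by exact_mod_cast (by linarith : -(c * V (x u)) < r))))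
    le_rfl (fun u _ => (add_zero _).ge) b ⟨hab, le_rfl⟩
  rwa [gronwallBound_ε0, mul_comm] at this

end WellPosed

namespace IsSolution

variable {I : Type*} {n : ℕ} {f : I → EuclideanSpace ℝ (Fin n) → EuclideanSpace ℝ (Fin n)}
  (F : WellPosed f) {σ : SwitchingSignal I} {x : ℝ → EuclideanSpace ℝ (Fin n)} {c : ℝ}

theorem le_exp_mul_of_inter_Ioo_eq_empty (hx : IsSolution f σ x) {s r : ℝ} (hs : 0 ≤ s)
    (hsr : s ≤ r) (hempty : σ.instants ∩ Ioo s r = ∅) {V : EuclideanSpace ℝ (Fin n) → ℝ}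
    (hV : Continuous V) (hdec : ∀ y, dini (F.Φ (σ.toFun s)) V y ≤ ((-(c * V y) : ℝ) : EReal)) :
    V (x r) ≤ exp (-c * (r - s)) * V (x s) :=
  F.le_exp_mul_of_dini_le hV hdec (hx.1.mono fun _ hu => hs.trans hu.1)
    (fun u hu => σ.toFun_eq_of_inter_Ioo_eq_empty hs hempty hu ▸ hx.2 u (hs.trans hu.1)) hsr

theorem le_exp_ncard_mul_exp {W : I → EuclideanSpace ℝ (Fin n) → ℝ} {μ : ℝ}
    (hx : IsSolution f σ x) (hW : ∀ i, Continuous (W i))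
    (hdec : ∀ i y, dini (F.Φ i) (W i) y ≤ ((-(c * W i y) : ℝ) : EReal))
    (hjump : ∀ i j y, W i y ≤ exp μ * W j y) {s t : ℝ} (hs : 0 ≤ s) (hst : s ≤ t) :
    W (σ.toFun t) (x t) ≤
      exp (μ * (σ.instants ∩ Ioc s t).ncard) * exp (-c * (t - s)) * W (σ.toFun s) (x s) := by
  obtain ⟨k, hk⟩ : ∃ k, (σ.instants ∩ Ioc s t).ncard = k := ⟨_, rfl⟩
  induction k generalizing s with
  | zero =>
    have hempty : σ.instants ∩ Ioc s t = ∅ := (ncard_eq_zero (σ.finite_inter_Ioc s t)).1 hk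
    rw [hk, ← σ.const_between s t hs hst hempty]
    simpa using hx.le_exp_mul_of_inter_Ioo_eq_empty F hs hst
      (subset_empty_iff.1 (hempty ▸ inter_subset_inter_right _ Ioo_subset_Ioc_self))
      (hW _) (hdec _)
  | succ k ih =>
    obtain ⟨r, hr, hr_min⟩ := exists_min_image _ id (σ.finite_inter_Ioc s t)
      (nonempty_of_ncard_ne_zero (by omega))
    have hempty : σ.instants ∩ Ioo s r = ∅ := eq_empty_of_forall_notMem fun u hu =>
      (hr_min u ⟨hu.1, hu.2.1, hu.2.2.le.trans hr.2.2⟩).not_gt hu.2.2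
    have hsplit : σ.instants ∩ Ioc s t = insert r (σ.instants ∩ Ioc r t) := by
      ext u
      refine ⟨fun hu => ?_, ?_⟩
      · rcases (hr_min u hu).eq_or_lt with rfl | hru
        exacts [mem_insert _ _, mem_insert_of_mem _ ⟨hu.1, hru, hu.2.2⟩]
      · rintro (rfl | ⟨hu, hru, hut⟩)
        exacts [hr, ⟨hu, hr.2.1.trans hru, hut⟩]
    have hk' : (σ.instants ∩ Ioc r t).ncard = k := by
      rw [hsplit, ncard_insert_of_notMem (fun h => lt_irrefl r h.2.1)
        (σ.finite_inter_Ioc r t)] at hk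
      omega
    have hdecay := hx.le_exp_mul_of_inter_Ioo_eq_empty F hs hr.2.1.le hempty (hW _) (hdec _)
    rw [hk]
    calc W (σ.toFun t) (x t)
        ≤ exp (μ * k) * exp (-c * (t - r)) * W (σ.toFun r) (x r) :=
          hk' ▸ ih (hs.trans hr.2.1.le) hr.2.2 hk'
      _ ≤ exp (μ * k) * exp (-c * (t - r)) * (exp μ * (exp (-c * (r - s)) *
            W (σ.toFun s) (x s))) := by
          gcongr
          exact (hjump _ _ _).trans (by gcongr)
      _ = exp (μ * ↑(k + 1)) * exp (-c * (t - s)) * W (σ.toFun s) (x s) := by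
          simp only [← exp_add, Nat.cast_succ, ← mul_assoc]
          ring_nf

end IsSolution

/-- Sufficiency of the "linearized" multiple Lyapunov-function conditions: the decay
estimate on `W_{σ(t)}(x(t))`, the resulting state bound, and `τ`-UGB. -/
theorem multiple_lyapunov_implies_tauUGB {m n : ℕ}
    (f : Fin m → EuclideanSpace ℝ (Fin n) → EuclideanSpace ℝ (Fin n))
    (F : WellPosed f) (τ : ℝ) (hτ : 0 < τ)
    (W : Fin m → EuclideanSpace ℝ (Fin n) → ℝ) (a₁ a₂ : ℝ → ℝ) (α : ℝ)
    (hW : ∀ i, Lip0 (W i)) (ha₁ : IsClassKInf a₁) (ha₂ : IsClassKInf a₂) (hα : 0 ≤ α)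
    (hsand : ∀ i x, a₁ ‖x‖ ≤ W i x ∧ W i x ≤ a₂ ‖x‖)
    (hdec : ∀ i x, dini (F.Φ i) (W i) x ≤ ((-((1 + α) * W i x) : ℝ) : EReal))
    (hjump : ∀ i j x, W i x ≤ Real.exp (α * τ) * W j x) :
    (∀ σ : SwitchingSignal (Fin m), ∀ x : ℝ → EuclideanSpace ℝ (Fin n),
      IsSolution f σ x → ∀ t : ℝ, 0 ≤ t →
        W (σ.toFun t) (x t) ≤ Real.exp (α * τ * (Nsw σ 0 t : ℝ)) *
          Real.exp (-(1 + α) * t) * W (σ.toFun 0) (x 0)) ∧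
    (∀ σ : SwitchingSignal (Fin m), ∀ x : ℝ → EuclideanSpace ℝ (Fin n),
      IsSolution f σ x → ∀ t : ℝ, 0 ≤ t →
        a₁ ‖x t‖ ≤ Real.exp (α * τ * (Nsw σ 0 t : ℝ)) *
          Real.exp (-(1 + α) * t) * a₂ ‖x 0‖) ∧
    TauUGB f τ := by
  have hW_cont i : Continuous (W i) :=
    (hW i).continuous_of_classK_bounds ha₁.1 ha₂.1 (fun x => (hsand i x).1)
      (fun x => (hsand i x).2)
  have hW_nonneg i x : 0 ≤ W i x := (ha₁.1.nonneg (norm_nonneg x)).trans (hsand i x).1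
  have hW_bound : ∀ σ : SwitchingSignal (Fin m), ∀ x, IsSolution f σ x → ∀ t : ℝ, 0 ≤ t →
      W (σ.toFun t) (x t) ≤ exp (α * τ * (Nsw σ 0 t : ℝ)) * exp (-(1 + α) * t) *
        W (σ.toFun 0) (x 0) := fun σ x hx t ht => by
    refine (hx.le_exp_ncard_mul_exp F hW_cont hdec hjump le_rfl ht).trans ?_
    rw [sub_zero]
    have hW₀ := hW_nonneg (σ.toFun 0) (x 0)
    gcongr
    exact_mod_cast σ.ncard_inter_Ioc_zero_le_Nsw t
  have hnorm_bound : ∀ σ : SwitchingSignal (Fin m), ∀ x, IsSolution f σ x → ∀ t : ℝ, 0 ≤ t →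
      a₁ ‖x t‖ ≤ exp (α * τ * (Nsw σ 0 t : ℝ)) * exp (-(1 + α) * t) * a₂ ‖x 0‖ :=
    fun σ x hx t ht => (hsand _ _).1.trans <| (hW_bound σ x hx t ht).trans <| by
      gcongr
      exact (hsand _ _).2
  obtain ⟨η, hη, hη_mono, hη_inv⟩ := ha₁.exists_leftInverse
  refine ⟨hW_bound, hnorm_bound, η, a₂, α, hη, ha₂, hα, fun σ x hx t ht => ?_⟩
  calc ‖x t‖ = η (a₁ ‖x t‖) := (hη_inv _ (norm_nonneg _)).symm
    _ ≤ _ := hη_mono (hnorm_bound σ x hx t ht)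
end
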